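/- Let F₁ and F₂ be marked graphs and let G be a graph such that G is not F₁-free and not F₂-free. Then there exists a marked graph F which is a (not necessarily disjoint) union of F₁ and F₂ such that G is not F-free. -/

import Mathlib

/-- The set of vertices at distance at most `r` from `v` in `G`. -/
def ballSet {V : Type*} (G : SimpleGraph V) (r : ℕ) (v : V) : Set V :=
  {u | G.dist v u ≤ r}

lemma center_mem_ballSet {V : Type*} (G : SimpleGraph V) (r : ℕ) (v : V) :
    v ∈ ballSet G r v := by
  simp [ballSet, SimpleGraph.dist_self]

/-- The `r`-ball of `v` in `G`: the subgraph induced on the vertices at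
distance at most `r` from `v`. -/
def ballGraph {V : Type*} (G : SimpleGraph V) (r : ℕ) (v : V) :
    SimpleGraph (ballSet G r v) :=
  G.induce (ballSet G r v)

/-- Isomorphism of pointed graphs. -/
def PtdIso {V W : Type*} (G : SimpleGraph V) (v : V) (H : SimpleGraph W) (w : W) : Prop :=
  ∃ e : G ≃g H, e v = w

/-- The `r`-ball of `v` in `G` has the `r`-type represented by the pointed graph `(H, c)`. -/
def BallType {V W : Type*} (G : SimpleGraph V) (r : ℕ) (v : V)
    (H : SimpleGraph W) (c : W) : Prop :=
  PtdIso (ballGraph G r v) ⟨v, center_mem_ballSet G r v⟩ H c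

/-- Vertex markings of a marked graph. -/
inductive Mark where
  | full
  | semifull
  | part
deriving DecidableEq

/-- A marked graph: a graph together with a marking of each vertex as
'full', 'semifull' or 'partial'. -/
structure MarkedGraph (V : Type*) where
  graph : SimpleGraph V
  mark : V → Mark

/-- The closed neighbourhood `N₁(v) = {v} ∪ N(v)`. -/
def closedNbhd {V : Type*} (G : SimpleGraph V) (v : V) : Set V :=
  insert v (G.neighborSet v)

/-- An embedding of a marked graph `F` into a graph `G` (Definition 2.1). -/
def IsMarkedEmbedding {V W : Type*} (F : MarkedGraph V) (G : SimpleGraph W)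
    (f : V → W) : Prop :=
  Function.Injective f ∧ ∀ v : V,
    (F.mark v = Mark.full → closedNbhd G (f v) = f '' closedNbhd F.graph v) ∧
    (F.mark v = Mark.semifull →
      closedNbhd G (f v) ∩ Set.range f = f '' closedNbhd F.graph v) ∧
    (F.mark v = Mark.part → f '' closedNbhd F.graph v ⊆ closedNbhd G (f v))

/-- `F` is a (not necessarily disjoint) union of the marked graphs `F₁` and `F₂`:
there are embeddings of `F₁`, `F₂` into the graph of `F` (ignoring `F`'s markings)
whose images cover `F`, a vertex is 'full' iff it is the image of a full vertex,
and 'semifull' iff it is not full but the image of a semifull vertex (and hence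
'partial' otherwise). -/
def IsMarkedUnion {U V₁ V₂ : Type*} (F : MarkedGraph U)
    (F₁ : MarkedGraph V₁) (F₂ : MarkedGraph V₂) : Prop :=
  ∃ (f₁ : V₁ → U) (f₂ : V₂ → U),
    IsMarkedEmbedding F₁ F.graph f₁ ∧ IsMarkedEmbedding F₂ F.graph f₂ ∧
    (∀ u : U, u ∈ Set.range f₁ ∪ Set.range f₂) ∧
    (∀ u : U, F.mark u = Mark.full ↔
      ((∃ w, f₁ w = u ∧ F₁.mark w = Mark.full) ∨
       (∃ w, f₂ w = u ∧ F₂.mark w = Mark.full))) ∧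
    (∀ u : U, F.mark u = Mark.semifull ↔
      (¬ ((∃ w, f₁ w = u ∧ F₁.mark w = Mark.full) ∨
          (∃ w, f₂ w = u ∧ F₂.mark w = Mark.full)) ∧
       ((∃ w, f₁ w = u ∧ F₁.mark w = Mark.semifull) ∨
        (∃ w, f₂ w = u ∧ F₂.mark w = Mark.semifull))))

/-!
Take for `F` the subgraph of `G` induced on the union of the two images, each vertex carrying the
strongest mark among its preimages. The given embeddings corestrict to embeddings into `F`, and
the inclusion of `F` into `G` is a marked embedding: the semifull and partial conditions hold for
every induced subgraph, and the closed neighbourhood of a full vertex lies inside the image of the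
embedding that makes it full.
-/

section MarkedEmbedding

variable {V W : Type*}

lemma closedNbhd_induce (G : SimpleGraph W) (s : Set W) (u : s) :
    closedNbhd (G.induce s) u = (↑) ⁻¹' closedNbhd G u := by
  ext x
  simp [closedNbhd, Subtype.ext_iff]

lemma Set.image_codRestrict {g : V → W} {s : Set W} (hs : ∀ v, g v ∈ s) (A : Set V) :
    Set.codRestrict g s hs '' A = (↑) ⁻¹' (g '' A) := by
  ext x
  simp [Subtype.ext_iff]

namespace IsMarkedEmbedding

variable {F : MarkedGraph V} {G : SimpleGraph W} {g : V → W}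

lemma closedNbhd_subset_range (h : IsMarkedEmbedding F G g) {v : V}
    (hv : F.mark v = Mark.full) : closedNbhd G (g v) ⊆ Set.range g := by
  rw [(h.2 v).1 hv]
  exact Set.image_subset_range g _

lemma codRestrict (h : IsMarkedEmbedding F G g) (s : Set W) (hs : ∀ v, g v ∈ s) :
    IsMarkedEmbedding F (G.induce s) (Set.codRestrict g s hs) := by
  refine ⟨h.1.codRestrict hs, fun v => ⟨fun hv => ?_, fun hv => ?_, fun hv => ?_⟩⟩ <;>
    simp only [closedNbhd_induce, Set.image_codRestrict, Set.range_codRestrict,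
      Set.val_codRestrict_apply]
  · rw [(h.2 v).1 hv]
  · rw [← Set.preimage_inter, (h.2 v).2.1 hv]
  · exact Set.preimage_mono ((h.2 v).2.2 hv)

end IsMarkedEmbedding

lemma isMarkedEmbedding_induce_val {G : SimpleGraph W} {s : Set W} (mark : s → Mark)
    (hfull : ∀ u, mark u = Mark.full → closedNbhd G u ⊆ s) :
    IsMarkedEmbedding ⟨G.induce s, mark⟩ G Subtype.val := by
  refine ⟨Subtype.val_injective, fun u => ⟨fun hu => ?_, fun _ => ?_, fun _ => ?_⟩⟩ <;>
    simp only [closedNbhd_induce, Subtype.range_coe_subtype, Set.ofPred_mem_eq,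
      Set.image_preimage_eq_inter_range]
  · exact (Set.inter_eq_left.2 (hfull u hu)).symm
  · exact Set.inter_subset_left

end MarkedEmbedding

open Classical in
noncomputable def unionMark (isFull isSemifull : Prop) : Mark :=
  if isFull then Mark.full else if isSemifull then Mark.semifull else Mark.part

lemma unionMark_eq_full_iff {p q : Prop} : unionMark p q = Mark.full ↔ p := by
  unfold unionMark
  split_ifs <;> simp_all

lemma unionMark_eq_semifull_iff {p q : Prop} : unionMark p q = Mark.semifull ↔ ¬p ∧ q := by
  unfold unionMark
  split_ifs <;> simp_all

/-- if `G` is neither `F₁`-free nor `F₂`-free, then some union `F`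
of `F₁` and `F₂` embeds into `G`. -/
theorem stmt8 {V V₁ V₂ : Type} (G : SimpleGraph V)
    (F₁ : MarkedGraph V₁) (F₂ : MarkedGraph V₂) (g₁ : V₁ → V) (g₂ : V₂ → V)
    (h₁ : IsMarkedEmbedding F₁ G g₁) (h₂ : IsMarkedEmbedding F₂ G g₂) :
    ∃ (U : Type) (F : MarkedGraph U), IsMarkedUnion F F₁ F₂ ∧
      ∃ g : U → V, IsMarkedEmbedding F G g := by
  let S : Set V := Set.range g₁ ∪ Set.range g₂
  let f₁ := Set.codRestrict g₁ S fun w => Or.inl ⟨w, rfl⟩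
  let f₂ := Set.codRestrict g₂ S fun w => Or.inr ⟨w, rfl⟩
  let F : MarkedGraph S := ⟨G.induce S, fun u => unionMark
    ((∃ w, f₁ w = u ∧ F₁.mark w = Mark.full) ∨ (∃ w, f₂ w = u ∧ F₂.mark w = Mark.full))
    ((∃ w, f₁ w = u ∧ F₁.mark w = Mark.semifull) ∨
      (∃ w, f₂ w = u ∧ F₂.mark w = Mark.semifull))⟩
  have hcover : ∀ u : S, u ∈ Set.range f₁ ∪ Set.range f₂
    | ⟨_, .inl ⟨w, rfl⟩⟩ => .inl ⟨w, rfl⟩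
    | ⟨_, .inr ⟨w, rfl⟩⟩ => .inr ⟨w, rfl⟩
  have hfull (u : S) (hu : F.mark u = Mark.full) : closedNbhd G u ⊆ S := by
    rcases unionMark_eq_full_iff.1 hu with ⟨w, rfl, hw⟩ | ⟨w, rfl, hw⟩
    · exact (h₁.closedNbhd_subset_range hw).trans Set.subset_union_left
    · exact (h₂.closedNbhd_subset_range hw).trans Set.subset_union_right
  exact ⟨S, F, ⟨f₁, f₂, h₁.codRestrict S _, h₂.codRestrict S _, hcover,
    fun _ => unionMark_eq_full_iff, fun _ => unionMark_eq_semifull_iff⟩,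
    Subtype.val, isMarkedEmbedding_induce_val F.mark hfull⟩
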